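/- arXiv:math/0203066 — 2 statements merged into one kernel-verified Lean document; each statement's English description precedes it below -/
import Mathlib

section
/- For every f ∈ Diff_0([0,1]) with f ≠ id, the series ∑_{n≥1} 1/Γ_n(f) converges. -/
/-- `IsDiff0 f g` says that `f` is an orientation-preserving `C¹` diffeomorphism of the
interval `[0,1]` fixing the endpoints, with inverse `g`. -/
structure IsDiff0 (f g : ℝ → ℝ) : Prop where
  mapsTo : Set.MapsTo f (Set.Icc 0 1) (Set.Icc 0 1)
  mapsTo_inv : Set.MapsTo g (Set.Icc 0 1) (Set.Icc 0 1)
  left_inv : ∀ x ∈ Set.Icc (0:ℝ) 1, g (f x) = x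
  right_inv : ∀ x ∈ Set.Icc (0:ℝ) 1, f (g x) = x
  map_zero : f 0 = 0
  map_one : f 1 = 1
  contDiffOn : ContDiffOn ℝ 1 f (Set.Icc 0 1)
  contDiffOn_inv : ContDiffOn ℝ 1 g (Set.Icc 0 1)
  deriv_pos : ∀ x ∈ Set.Icc (0:ℝ) 1, 0 < derivWithin f (Set.Icc 0 1) x

/-- The growth sequence `Γ_n(f) = max (sup_x (fⁿ)'(x), sup_x (f⁻ⁿ)'(x))`, where `g = f⁻¹`. -/
noncomputable def Gamma (f g : ℝ → ℝ) (n : ℕ) : ℝ :=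
  max (⨆ x : Set.Icc (0:ℝ) 1, derivWithin (f^[n]) (Set.Icc 0 1) (x : ℝ))
      (⨆ x : Set.Icc (0:ℝ) 1, derivWithin (g^[n]) (Set.Icc 0 1) (x : ℝ))

/-!
Suppose `x < f x` for some `x` (otherwise replace `f` by `f⁻¹`, which has the same growth
sequence). The orbit `aₙ = fⁿ x` increases in `[0,1]`, so its gaps `δₙ = aₙ₊₁ - aₙ` are summable.
Since `f⁻ⁿ` maps `[aₙ, aₙ₊₁]` onto `[a₀, a₁]`, the mean value theorem gives a point where
`(f⁻ⁿ)' = δ₀ / δₙ`, hence `Γₙ ≥ δ₀ / δₙ` and `1 / Γₙ ≤ δₙ / δ₀`.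
-/

open Set Function

lemma Set.LeftInvOn.iterate {α : Type*} {f g : α → α} {s : Set α} (hinv : LeftInvOn g f s)
    (hf : MapsTo f s s) (n : ℕ) : LeftInvOn g^[n] f^[n] s := by
  induction n with
  | zero => exact fun _ _ ↦ rfl
  | succ n ih =>
    intro x hx
    rw [iterate_succ_apply' f, iterate_succ_apply g, hinv (hf.iterate n hx), ih hx]

lemma ContDiffOn.iterate {𝕜 E : Type*} [NontriviallyNormedField 𝕜] [NormedAddCommGroup E]
    [NormedSpace 𝕜 E] {k : WithTop ℕ∞} {f : E → E} {s : Set E} (hf : ContDiffOn 𝕜 k f s)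
    (hs : MapsTo f s s) (n : ℕ) : ContDiffOn 𝕜 k f^[n] s := by
  induction n with
  | zero => exact contDiffOn_id
  | succ n ih => rw [iterate_succ]; exact ih.comp hf hs

lemma StrictMonoOn.of_rightInvOn {α β : Type*} [LinearOrder α] [Preorder β] {f : α → β}
    {g : β → α} {s : Set α} {t : Set β} (hf : StrictMonoOn f s) (hg : MapsTo g t s)
    (hinv : RightInvOn g f t) : StrictMonoOn g t := by
  intro a ha b hb hab
  by_contra! hba
  have := hf.monotoneOn (hg hb) (hg ha) hba
  rw [hinv hb, hinv ha] at this
  exact not_le_of_gt hab this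

lemma StrictMonoOn.strictMono_iterate_of_lt_map {α : Type*} [Preorder α] {f : α → α}
    {s : Set α} (hf : StrictMonoOn f s) (hs : MapsTo f s s) {x : α} (hx : x ∈ s)
    (hlt : x < f x) : StrictMono fun n ↦ f^[n] x := by
  refine strictMono_nat_of_lt_succ fun n ↦ ?_
  induction n with
  | zero => simpa using hlt
  | succ n ih =>
    simpa only [iterate_succ_apply'] using hf (hs.iterate n hx) (hs.iterate (n + 1) hx) ih

lemma summable_sub_of_monotone_of_le {a : ℕ → ℝ} {B : ℝ} (ha : Monotone a)
    (hB : ∀ n, a n ≤ B) : Summable fun n ↦ a (n + 1) - a n := by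
  refine summable_of_sum_range_le (c := B - a 0) (fun n ↦ sub_nonneg.2 (ha n.le_succ))
    fun n ↦ ?_
  rw [Finset.sum_range_sub a n]
  linarith [hB n]

lemma div_sub_le_iSup_derivWithin {h : ℝ → ℝ} {a b p q : ℝ}
    (hh : ContDiffOn ℝ 1 h (Icc a b)) (hp : p ∈ Icc a b) (hq : q ∈ Icc a b) (hpq : p < q) :
    (h q - h p) / (q - p) ≤ ⨆ x : Icc a b, derivWithin h (Icc a b) x := by
  have hsub : Icc p q ⊆ Icc a b := Icc_subset_Icc hp.1 hq.2
  have hIoo : Ioo p q ⊆ Ioo a b := Ioo_subset_Ioo hp.1 hq.2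
  obtain ⟨c, hc, hslope⟩ := exists_deriv_eq_slope h hpq (hh.continuousOn.mono hsub)
    ((hh.differentiableOn one_ne_zero).mono (Ioo_subset_Icc_self.trans hsub))
  have hc' : c ∈ Ioo a b := hIoo hc
  have hbdd : BddAbove (range fun x : Icc a b ↦ derivWithin h (Icc a b) x) := by
    rw [← image_eq_range]
    exact isCompact_Icc.bddAbove_image
      (hh.continuousOn_derivWithin (uniqueDiffOn_Icc (hp.1.trans_lt hpq |>.trans_le hq.2))
        le_rfl)
  calc (h q - h p) / (q - p) = derivWithin h (Icc a b) c := by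
        rw [derivWithin_of_mem_nhds (Icc_mem_nhds hc'.1 hc'.2), hslope]
    _ ≤ _ := le_ciSup hbdd ⟨c, Ioo_subset_Icc_self hc'⟩

lemma IsDiff0.strictMonoOn {f g : ℝ → ℝ} (hf : IsDiff0 f g) : StrictMonoOn f (Icc 0 1) := by
  refine strictMonoOn_of_deriv_pos (convex_Icc 0 1) hf.contDiffOn.continuousOn fun c hc ↦ ?_
  rw [interior_Icc] at hc
  rw [← derivWithin_of_mem_nhds (Icc_mem_nhds hc.1 hc.2)]
  exact hf.deriv_pos c (Ioo_subset_Icc_self hc)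

lemma Gamma_comm (f g : ℝ → ℝ) (n : ℕ) : Gamma g f n = Gamma f g n :=
  max_comm _ _

lemma div_sub_iterate_le_Gamma {f g : ℝ → ℝ} (hf : MapsTo f (Icc 0 1) (Icc 0 1))
    (hinv : LeftInvOn g f (Icc 0 1)) (hg : ContDiffOn ℝ 1 g (Icc 0 1))
    (hgI : MapsTo g (Icc 0 1) (Icc 0 1)) {x : ℝ} (hx : x ∈ Icc 0 1)
    {n : ℕ} (hlt : f^[n] x < f^[n + 1] x) :
    (f x - x) / (f^[n + 1] x - f^[n] x) ≤ Gamma f g n := by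
  have hfn : f^[n + 1] x = f^[n] (f x) := iterate_succ_apply f n x
  have key := div_sub_le_iSup_derivWithin (hg.iterate hgI n) (hf.iterate n hx)
    (hf.iterate (n + 1) hx) hlt
  rw [hinv.iterate hf n hx, hfn, hinv.iterate hf n (hf hx)] at key
  rw [hfn]
  exact key.trans (le_max_right _ _)

lemma summable_inv_Gamma_of_lt {f g : ℝ → ℝ} (hf : MapsTo f (Icc 0 1) (Icc 0 1))
    (hmono : StrictMonoOn f (Icc 0 1)) (hinv : LeftInvOn g f (Icc 0 1))
    (hg : ContDiffOn ℝ 1 g (Icc 0 1)) (hgI : MapsTo g (Icc 0 1) (Icc 0 1)) {x : ℝ}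
    (hx : x ∈ Icc 0 1) (hlt : x < f x) :
    Summable fun n : ℕ ↦ 1 / Gamma f g (n + 1) := by
  have horbit := hmono.strictMono_iterate_of_lt_map hf hx hlt
  have hgaps : Summable fun n ↦ f^[n + 1] x - f^[n] x :=
    summable_sub_of_monotone_of_le (a := fun n ↦ f^[n] x) horbit.monotone
      fun n ↦ (hf.iterate n hx).2
  have hgap (n : ℕ) : 0 < f^[n + 1] x - f^[n] x := sub_pos.2 (horbit n.lt_succ_self)
  have hΓ (n : ℕ) : (f x - x) / (f^[n + 1] x - f^[n] x) ≤ Gamma f g n :=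
    div_sub_iterate_le_Gamma hf hinv hg hgI hx (horbit n.lt_succ_self)
  have hΓ_pos (n : ℕ) : 0 < Gamma f g n := (div_pos (sub_pos.2 hlt) (hgap n)).trans_le (hΓ n)
  refine .of_nonneg_of_le (fun n ↦ (one_div_pos.2 (hΓ_pos _)).le) (fun n ↦ ?_)
    (((summable_nat_add_iff 1).2 hgaps).div_const (f x - x))
  calc 1 / Gamma f g (n + 1) ≤ 1 / ((f x - x) / (f^[n + 1 + 1] x - f^[n + 1] x)) :=
        one_div_le_one_div_of_le (div_pos (sub_pos.2 hlt) (hgap _)) (hΓ _)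
    _ = (f^[n + 1 + 1] x - f^[n + 1] x) / (f x - x) := one_div_div _ _

/-- For every `f ∈ Diff₀([0,1])` different from the identity, `∑_{n ≥ 1} 1/Γ_n(f) < ∞`. -/
theorem summable_inv_Gamma (f g : ℝ → ℝ) (hf : IsDiff0 f g)
    (hne : ∃ x ∈ Set.Icc (0:ℝ) 1, f x ≠ x) :
    Summable (fun n : ℕ => 1 / Gamma f g (n + 1)) := by
  obtain ⟨x, hx, hfx⟩ := hne
  have hleft : LeftInvOn g f (Icc 0 1) := hf.left_inv
  have hright : RightInvOn g f (Icc 0 1) := hf.right_inv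
  rcases hfx.lt_or_gt with hlt | hgt
  · have hgfx : f x < g (f x) := by rwa [hleft hx]
    simpa only [Gamma_comm] using summable_inv_Gamma_of_lt hf.mapsTo_inv
      (hf.strictMonoOn.of_rightInvOn hf.mapsTo_inv hright) hright hf.contDiffOn hf.mapsTo
      (hf.mapsTo hx) hgfx
  · exact summable_inv_Gamma_of_lt hf.mapsTo hf.strictMonoOn hleft hf.contDiffOn_inv
      hf.mapsTo_inv hx hgt
end

section
/- Let f ∈ Diff_0([0,1]) be a C² diffeomorphism with lim_{n→∞} Γ_n(f)^{1/n} = 1. Define a_n = max_{x∈[0,1]} log (fⁿ)'(x) for n ≥ 0 (respectively a_n = max_{x∈[0,1]} log (f⁻ⁿ)'(x)), so a₀ = 0. Then for every n ≥ 1, 2a_n − a_{n−1} − a_{n+1} ≤ C(f)·e^{−a_n}, where C(f) = L(f)·e^{v(f)}, L(f) is the Lipschitz constant of log f' on [0,1], and v(f) is the total variation of log f' on [0,1]. -/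
/-- `a_n(f) = max_{x ∈ [0,1]} log (fⁿ)'(x)`. -/
noncomputable def aseq (f : ℝ → ℝ) (n : ℕ) : ℝ :=
  ⨆ x : Set.Icc (0:ℝ) 1, Real.log (derivWithin (f^[n]) (Set.Icc 0 1) (x : ℝ))

/-!
Let `x` maximise `(fⁿ⁺¹)'`. By the chain rule, evaluating `(fⁿ⁺²)'` at `f⁻¹ x` and `(fⁿ)'` at
`f x` gives `2 aₙ₊₁ - aₙ - aₙ₊₂ ≤ log f'(x) - log f'(f⁻¹ x) ≤ L |x - f⁻¹ x|`. The fundamental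
interval `J` between `f⁻¹ x` and `x` has images `J, f(J), …, fⁿ(J)` that are consecutive intervals,
so `log (fⁿ⁺¹)'` oscillates by at most `v` on `J` (Denjoy's distortion argument); since `fⁿ⁺¹(J)` has
length at most `1`, the mean value theorem gives `|J| ≤ e^v e^{-aₙ₊₁}`. The inverse is treated
in the same way, with `log (f⁻¹)' = -log f' ∘ f⁻¹` having the same variation.
-/

open Set

noncomputable def logDerivIcc (f : ℝ → ℝ) (x : ℝ) : ℝ :=
  Real.log (derivWithin f (Icc 0 1) x)

section eVariationOn

variable {α E : Type*} [LinearOrder α] [PseudoEMetricSpace E] {f : α → E} {s : Set α}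
  {b : ℕ → α}

theorem eVariationOn.sum_inter_uIcc_eq (hb : Monotone b ∨ Antitone b) (hbs : ∀ t, b t ∈ s)
    (k : ℕ) :
    ∑ t ∈ Finset.range k, eVariationOn f (s ∩ uIcc (b t) (b (t + 1))) =
      eVariationOn f (s ∩ uIcc (b 0) (b k)) := by
  induction k with
  | zero =>
    rw [Finset.sum_range_zero, uIcc_self, eq_comm]
    exact eVariationOn.subsingleton f (subsingleton_singleton.anti inter_subset_right)
  | succ k ih =>
    rw [Finset.sum_range_succ, ih]
    rcases hb with hb | hb
    · rw [uIcc_of_le (hb k.zero_le), uIcc_of_le (hb k.le_succ), uIcc_of_le (hb (k + 1).zero_le),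
        eVariationOn.Icc_add_Icc f (hb k.zero_le) (hb k.le_succ) (hbs k)]
    · rw [uIcc_of_ge (hb k.zero_le), uIcc_of_ge (hb k.le_succ), uIcc_of_ge (hb (k + 1).zero_le),
        add_comm, eVariationOn.Icc_add_Icc f (hb k.le_succ) (hb k.zero_le) (hbs k)]

theorem eVariationOn.sum_edist_le (hb : Monotone b ∨ Antitone b) (hbs : ∀ t, b t ∈ s)
    {x y : ℕ → α} (hx : ∀ t, x t ∈ s ∩ uIcc (b t) (b (t + 1)))
    (hy : ∀ t, y t ∈ s ∩ uIcc (b t) (b (t + 1))) (k : ℕ) :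
    ∑ t ∈ Finset.range k, edist (f (x t)) (f (y t)) ≤ eVariationOn f s :=
  calc ∑ t ∈ Finset.range k, edist (f (x t)) (f (y t))
      ≤ ∑ t ∈ Finset.range k, eVariationOn f (s ∩ uIcc (b t) (b (t + 1))) :=
        Finset.sum_le_sum fun t _ => eVariationOn.edist_le f (hx t) (hy t)
    _ = eVariationOn f (s ∩ uIcc (b 0) (b k)) := sum_inter_uIcc_eq hb hbs k
    _ ≤ eVariationOn f s := eVariationOn.mono f inter_subset_left

end eVariationOn

namespace IsDiff0

variable {f g f₁ g₁ : ℝ → ℝ} {x : ℝ}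

theorem differentiableOn (h : IsDiff0 f g) : DifferentiableOn ℝ f (Icc 0 1) :=
  h.contDiffOn.differentiableOn one_ne_zero

theorem strictMonoOn_s9 (h : IsDiff0 f g) : StrictMonoOn f (Icc 0 1) :=
  strictMonoOn_of_hasDerivWithinAt_pos (convex_Icc 0 1) h.contDiffOn.continuousOn
    (fun x hx => (h.differentiableOn x (interior_subset hx)).hasDerivWithinAt.mono interior_subset)
    fun x hx => h.deriv_pos x (interior_subset hx)

theorem derivWithin_comp (h : IsDiff0 f g) (h₁ : IsDiff0 f₁ g₁) (hx : x ∈ Icc (0 : ℝ) 1) :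
    derivWithin (f ∘ f₁) (Icc 0 1) x =
      derivWithin f (Icc 0 1) (f₁ x) * derivWithin f₁ (Icc 0 1) x :=
  _root_.derivWithin_comp x (h.differentiableOn _ (h₁.mapsTo hx)) (h₁.differentiableOn x hx)
    h₁.mapsTo

theorem derivWithin_inv (h : IsDiff0 f g) (hx : x ∈ Icc (0 : ℝ) 1) :
    derivWithin g (Icc 0 1) x = (derivWithin f (Icc 0 1) (g x))⁻¹ := by
  refine eq_inv_of_mul_eq_one_right ?_
  rw [← _root_.derivWithin_comp x (h.differentiableOn _ (h.mapsTo_inv hx))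
      ((h.contDiffOn_inv.differentiableOn one_ne_zero) x hx) h.mapsTo_inv,
    show derivWithin (f ∘ g) (Icc 0 1) x = derivWithin id (Icc 0 1) x from
      derivWithin_congr (fun y hy => h.right_inv y hy) (h.right_inv x hx),
    derivWithin_id _ _ (uniqueDiffOn_Icc one_pos x hx)]

theorem symm (h : IsDiff0 f g) : IsDiff0 g f where
  mapsTo := h.mapsTo_inv
  mapsTo_inv := h.mapsTo
  left_inv := h.right_inv
  right_inv := h.left_inv
  map_zero := by simpa [h.map_zero] using h.left_inv 0 (left_mem_Icc.2 zero_le_one)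
  map_one := by simpa [h.map_one] using h.left_inv 1 (right_mem_Icc.2 zero_le_one)
  contDiffOn := h.contDiffOn_inv
  contDiffOn_inv := h.contDiffOn
  deriv_pos x hx := by
    rw [h.derivWithin_inv hx]
    exact inv_pos.2 (h.deriv_pos _ (h.mapsTo_inv hx))

theorem comp (h : IsDiff0 f g) (h₁ : IsDiff0 f₁ g₁) : IsDiff0 (f ∘ f₁) (g₁ ∘ g) where
  mapsTo := h.mapsTo.comp h₁.mapsTo
  mapsTo_inv := h₁.mapsTo_inv.comp h.mapsTo_inv
  left_inv x hx := by simp [h.left_inv _ (h₁.mapsTo hx), h₁.left_inv x hx]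
  right_inv x hx := by simp [h₁.right_inv _ (h.mapsTo_inv hx), h.right_inv x hx]
  map_zero := by simp [h.map_zero, h₁.map_zero]
  map_one := by simp [h.map_one, h₁.map_one]
  contDiffOn := h.contDiffOn.comp h₁.contDiffOn h₁.mapsTo
  contDiffOn_inv := h₁.contDiffOn_inv.comp h.contDiffOn_inv h.mapsTo_inv
  deriv_pos x hx := by
    rw [h.derivWithin_comp h₁ hx]
    exact mul_pos (h.deriv_pos _ (h₁.mapsTo hx)) (h₁.deriv_pos x hx)

theorem refl : IsDiff0 id id where
  mapsTo := mapsTo_id _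
  mapsTo_inv := mapsTo_id _
  left_inv _ _ := rfl
  right_inv _ _ := rfl
  map_zero := rfl
  map_one := rfl
  contDiffOn := contDiffOn_id
  contDiffOn_inv := contDiffOn_id
  deriv_pos x hx := by rw [derivWithin_id _ _ (uniqueDiffOn_Icc one_pos x hx)]; exact one_pos

theorem iterate (h : IsDiff0 f g) : ∀ k : ℕ, IsDiff0 (f^[k]) (g^[k])
  | 0 => refl
  | k + 1 => by
    rw [Function.iterate_succ, Function.iterate_succ']
    exact (h.iterate k).comp h

theorem logDerivIcc_comp (h : IsDiff0 f g) (h₁ : IsDiff0 f₁ g₁) (hx : x ∈ Icc (0 : ℝ) 1) :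
    logDerivIcc (f ∘ f₁) x = logDerivIcc f (f₁ x) + logDerivIcc f₁ x := by
  rw [logDerivIcc, h.derivWithin_comp h₁ hx,
    Real.log_mul (h.deriv_pos _ (h₁.mapsTo hx)).ne' (h₁.deriv_pos x hx).ne']
  rfl

theorem logDerivIcc_inv (h : IsDiff0 f g) (hx : x ∈ Icc (0 : ℝ) 1) :
    logDerivIcc g x = -logDerivIcc f (g x) := by
  rw [logDerivIcc, h.derivWithin_inv hx, Real.log_inv]
  rfl

theorem logDerivIcc_iterate_succ (h : IsDiff0 f g) (k : ℕ) (hx : x ∈ Icc (0 : ℝ) 1) :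
    logDerivIcc (f^[k + 1]) x = logDerivIcc (f^[k]) (f x) + logDerivIcc f x := by
  rw [Function.iterate_succ]
  exact (h.iterate k).logDerivIcc_comp h hx

theorem logDerivIcc_iterate (h : IsDiff0 f g) (k : ℕ) (hx : x ∈ Icc (0 : ℝ) 1) :
    logDerivIcc (f^[k]) x = ∑ t ∈ Finset.range k, logDerivIcc f (f^[t] x) := by
  induction k generalizing x with
  | zero => simp [logDerivIcc, derivWithin_id _ _ (uniqueDiffOn_Icc one_pos x hx)]
  | succ k ih =>
    rw [h.logDerivIcc_iterate_succ k hx, ih (h.mapsTo hx), Finset.sum_range_succ']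
    simp only [Function.iterate_succ_apply, Function.iterate_zero_apply]

theorem continuousOn_logDerivIcc (h : IsDiff0 f g) : ContinuousOn (logDerivIcc f) (Icc 0 1) :=
  (h.contDiffOn.continuousOn_derivWithin (uniqueDiffOn_Icc one_pos) le_rfl).log
    fun x hx => (h.deriv_pos x hx).ne'

theorem logDerivIcc_iterate_le_aseq (h : IsDiff0 f g) (k : ℕ) (hx : x ∈ Icc (0 : ℝ) 1) :
    logDerivIcc (f^[k]) x ≤ aseq f k := by
  refine le_ciSup (f := fun y : Icc (0 : ℝ) 1 => logDerivIcc (f^[k]) y) ?_ ⟨x, hx⟩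
  rw [← image_eq_range]
  exact isCompact_Icc.bddAbove_image (h.iterate k).continuousOn_logDerivIcc

theorem exists_aseq_eq (h : IsDiff0 f g) (k : ℕ) :
    ∃ x ∈ Icc (0 : ℝ) 1, aseq f k = logDerivIcc (f^[k]) x := by
  obtain ⟨x, hx, hmax⟩ := isCompact_Icc.exists_isMaxOn (nonempty_Icc.2 zero_le_one)
    (h.iterate k).continuousOn_logDerivIcc
  exact ⟨x, hx, hmax.iSup_eq hx⟩

theorem exists_two_mul_aseq_sub_le (h : IsDiff0 f g) (n : ℕ) :
    ∃ x ∈ Icc (0 : ℝ) 1, aseq f (n + 1) = logDerivIcc (f^[n + 1]) x ∧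
      2 * aseq f (n + 1) - aseq f n - aseq f (n + 2) ≤ logDerivIcc f x - logDerivIcc f (g x) := by
  obtain ⟨x, hx, hax⟩ := h.exists_aseq_eq (n + 1)
  have hgx := h.mapsTo_inv hx
  have h_next : aseq f (n + 1) + logDerivIcc f (g x) ≤ aseq f (n + 2) := by
    have := h.logDerivIcc_iterate_le_aseq (n + 2) hgx
    rwa [h.logDerivIcc_iterate_succ (n + 1) hgx, h.right_inv x hx, ← hax] at this
  have h_prev : aseq f (n + 1) - logDerivIcc f x ≤ aseq f n := by
    have := h.logDerivIcc_iterate_le_aseq n (h.mapsTo hx)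
    rw [hax, h.logDerivIcc_iterate_succ n hx]
    linarith
  exact ⟨x, hx, hax, by linarith⟩

theorem monotone_or_antitone_orbit (h : IsDiff0 f g) {w : ℝ} (hw : w ∈ Icc (0 : ℝ) 1) :
    Monotone (fun t => f^[t] w) ∨ Antitone (fun t => f^[t] w) := by
  have hmono (t : ℕ) : MonotoneOn (f^[t]) (Icc 0 1) := (h.iterate t).strictMonoOn_s9.monotoneOn
  rcases le_total w (f w) with hle | hle
  · refine Or.inl (monotone_nat_of_le_succ fun t => ?_)
    simpa only [Function.iterate_succ_apply] using hmono t hw (h.mapsTo hw) hle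
  · refine Or.inr (antitone_nat_of_succ_le fun t => ?_)
    simpa only [Function.iterate_succ_apply] using hmono t (h.mapsTo hw) hw hle

theorem logDerivIcc_iterate_sub_le (h : IsDiff0 f g) {v : ℝ} (hv0 : 0 ≤ v)
    (hvar : eVariationOn (logDerivIcc f) (Icc 0 1) ≤ ENNReal.ofReal v) (k : ℕ) {w y : ℝ}
    (hw : w ∈ Icc (0 : ℝ) 1) (hx : x ∈ uIcc w (f w)) (hy : y ∈ uIcc w (f w)) :
    logDerivIcc (f^[k]) x - logDerivIcc (f^[k]) y ≤ v := by
  have hsub : uIcc w (f w) ⊆ Icc 0 1 := uIcc_subset_Icc hw (h.mapsTo hw)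
  have horbit : ∀ z ∈ uIcc w (f w), ∀ t,
      f^[t] z ∈ Icc 0 1 ∩ uIcc (f^[t] w) (f^[t + 1] w) := fun z hz t =>
    ⟨h.mapsTo.iterate t (hsub hz), by
      rw [Function.iterate_succ_apply]
      exact ((h.iterate t).strictMonoOn_s9.monotoneOn.mono hsub).mapsTo_uIcc hz⟩
  have hsum := eVariationOn.sum_edist_le (f := logDerivIcc f) (h.monotone_or_antitone_orbit hw)
    (fun t => h.mapsTo.iterate t hw) (horbit x hx) (horbit y hy) k
  rw [h.logDerivIcc_iterate k (hsub hx), h.logDerivIcc_iterate k (hsub hy),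
    ← Finset.sum_sub_distrib]
  calc ∑ t ∈ Finset.range k, (logDerivIcc f (f^[t] x) - logDerivIcc f (f^[t] y))
      ≤ ∑ t ∈ Finset.range k, dist (logDerivIcc f (f^[t] x)) (logDerivIcc f (f^[t] y)) :=
        Finset.sum_le_sum fun t _ => (le_abs_self _).trans_eq (Real.dist_eq _ _).symm
    _ ≤ v := by
      rw [← ENNReal.ofReal_le_ofReal_iff hv0, ENNReal.ofReal_sum_of_nonneg fun _ _ => dist_nonneg]
      simp only [← edist_dist]
      exact hsum.trans hvar

theorem mul_abs_sub_le_abs_sub (h : IsDiff0 f g) {a b c : ℝ} (ha : a ∈ Icc (0 : ℝ) 1)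
    (hb : b ∈ Icc (0 : ℝ) 1) (hc : ∀ y ∈ uIcc a b, c ≤ derivWithin f (Icc 0 1) y) :
    c * |b - a| ≤ |f b - f a| := by
  have hsub : uIcc a b ⊆ Icc 0 1 := uIcc_subset_Icc ha hb
  have hint : interior (uIcc a b) ⊆ Ioo 0 1 := (interior_mono hsub).trans_eq interior_Icc
  have hmvt := (convex_uIcc a b).mul_sub_le_image_sub_of_le_deriv
    (h.contDiffOn.continuousOn.mono hsub) (h.differentiableOn.mono (interior_subset.trans hsub))
    fun y hy => by
      rw [← derivWithin_of_mem_nhds (Icc_mem_nhds (hint hy).1 (hint hy).2)]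
      exact hc y (interior_subset hy)
  rcases le_total a b with hab | hab
  · rw [abs_of_nonneg (sub_nonneg.2 hab)]
    exact (hmvt a left_mem_uIcc b right_mem_uIcc hab).trans (le_abs_self _)
  · rw [abs_sub_comm, abs_sub_comm (f b), abs_of_nonneg (sub_nonneg.2 hab)]
    exact (hmvt b right_mem_uIcc a left_mem_uIcc hab).trans (le_abs_self _)

theorem abs_map_sub_le (h : IsDiff0 f g) {v : ℝ} (hv0 : 0 ≤ v)
    (hvar : eVariationOn (logDerivIcc f) (Icc 0 1) ≤ ENNReal.ofReal v) (k : ℕ) {w : ℝ}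
    (hw : w ∈ Icc (0 : ℝ) 1) (hx : x ∈ uIcc w (f w)) :
    |f w - w| ≤ Real.exp v * Real.exp (-logDerivIcc (f^[k]) x) := by
  have hfw := h.mapsTo hw
  have hlower : ∀ y ∈ uIcc w (f w),
      Real.exp (logDerivIcc (f^[k]) x - v) ≤ derivWithin (f^[k]) (Icc 0 1) y := by
    intro y hy
    have hdist := h.logDerivIcc_iterate_sub_le hv0 hvar k hw hx hy
    rw [← Real.exp_log ((h.iterate k).deriv_pos y (uIcc_subset_Icc hw hfw hy))]
    exact Real.exp_le_exp.2 (by simp only [logDerivIcc] at hdist ⊢; linarith)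
  have himage : |f^[k] (f w) - f^[k] w| ≤ 1 := by
    have h₀ := h.mapsTo.iterate k hw
    have h₁ := h.mapsTo.iterate k hfw
    rw [abs_sub_le_iff]
    constructor <;> linarith [h₀.1, h₀.2, h₁.1, h₁.2]
  calc |f w - w| = Real.exp (v - logDerivIcc (f^[k]) x) *
        (Real.exp (logDerivIcc (f^[k]) x - v) * |f w - w|) := by
        rw [← mul_assoc, ← Real.exp_add, sub_add_sub_cancel, sub_self, Real.exp_zero, one_mul]
    _ ≤ Real.exp (v - logDerivIcc (f^[k]) x) * 1 := by
        gcongr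
        exact ((h.iterate k).mul_abs_sub_le_abs_sub hw hfw hlower).trans himage
    _ = Real.exp v * Real.exp (-logDerivIcc (f^[k]) x) := by
        rw [mul_one, sub_eq_add_neg, Real.exp_add]

theorem eVariationOn_logDerivIcc_symm_le (h : IsDiff0 f g) :
    eVariationOn (logDerivIcc g) (Icc 0 1) ≤ eVariationOn (logDerivIcc f) (Icc 0 1) := by
  rw [eVariationOn.eq_of_eqOn fun x hx => h.logDerivIcc_inv hx]
  calc eVariationOn (fun x => -logDerivIcc f (g x)) (Icc 0 1)
      ≤ eVariationOn (logDerivIcc f ∘ g) (Icc 0 1) := by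
        simpa [Function.comp_def] using (LipschitzWith.id.neg.lipschitzOnWith (s := univ)).comp_eVariationOn_le
          (f := fun z : ℝ => -z) (g := logDerivIcc f ∘ g) (mapsTo_univ _ _)
    _ ≤ eVariationOn (logDerivIcc f) (Icc 0 1) :=
        eVariationOn.comp_le_of_monotoneOn _ g h.symm.strictMonoOn_s9.monotoneOn h.mapsTo_inv

end IsDiff0

theorem aseq_almost_convex_general (f g : ℝ → ℝ) (hf : IsDiff0 f g)
    (v L : ℝ) (hv0 : 0 ≤ v) (hL0 : 0 ≤ L)
    (hv : eVariationOn (fun x => Real.log (derivWithin f (Set.Icc 0 1) x)) (Set.Icc 0 1)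
      = ENNReal.ofReal v)
    (hL : LipschitzOnWith (Real.toNNReal L)
      (fun x => Real.log (derivWithin f (Set.Icc 0 1) x)) (Set.Icc 0 1)) :
    (∀ n : ℕ, 2 * aseq f (n+1) - aseq f n - aseq f (n+2)
      ≤ L * Real.exp v * Real.exp (-(aseq f (n+1)))) ∧
    (∀ n : ℕ, 2 * aseq g (n+1) - aseq g n - aseq g (n+2)
      ≤ L * Real.exp v * Real.exp (-(aseq g (n+1)))) := by
  have hlip : ∀ x ∈ Icc (0 : ℝ) 1, logDerivIcc f x - logDerivIcc f (g x) ≤ L * |x - g x| := by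
    intro x hx
    have := hL.dist_le_mul x hx (g x) (hf.mapsTo_inv hx)
    rw [Real.dist_eq, Real.dist_eq, Real.coe_toNNReal L hL0] at this
    exact (le_abs_self _).trans this
  refine ⟨fun n => ?_, fun n => ?_⟩
  · obtain ⟨x, hx, hax, hdiff⟩ := hf.exists_two_mul_aseq_sub_le n
    have hgap := hf.abs_map_sub_le hv0 hv.le (n + 1) (hf.mapsTo_inv hx) (x := x)
      (by rw [hf.right_inv x hx]; exact right_mem_uIcc)
    rw [hf.right_inv x hx, ← hax] at hgap
    calc _ ≤ L * |x - g x| := hdiff.trans (hlip x hx)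
      _ ≤ L * (Real.exp v * Real.exp (-aseq f (n + 1))) := by gcongr
      _ = _ := by ring
  · obtain ⟨x, hx, hax, hdiff⟩ := hf.symm.exists_two_mul_aseq_sub_le n
    have hgap := hf.symm.abs_map_sub_le hv0 (hf.eVariationOn_logDerivIcc_symm_le.trans hv.le)
      (n + 1) hx left_mem_uIcc
    rw [abs_sub_comm, ← hax] at hgap
    have hswap : logDerivIcc g x - logDerivIcc g (f x) = logDerivIcc f x - logDerivIcc f (g x) := by
      rw [hf.logDerivIcc_inv hx, hf.logDerivIcc_inv (hf.mapsTo hx), hf.left_inv x hx]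
      ring
    calc _ ≤ L * |x - g x| := (hdiff.trans_eq hswap).trans (hlip x hx)
      _ ≤ L * (Real.exp v * Real.exp (-aseq g (n + 1))) := by gcongr
      _ = _ := by ring

/-- Almost-convexity of the sequences `a_n(f)` and `a_n(f⁻¹)`: for a `C²` diffeomorphism
`f` of `[0,1]` with `Γ_n(f)^{1/n} → 1`, one has
`2 a_n - a_{n-1} - a_{n+1} ≤ C(f) e^{-a_n}` with `C(f) = L(f) e^{v(f)}`, where `L(f)` is
the Lipschitz constant of `log f'` and `v(f)` its total variation on `[0,1]`. -/
theorem aseq_almost_convex (f g : ℝ → ℝ) (hf : IsDiff0 f g)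
    (hC2 : ContDiffOn ℝ 2 f (Set.Icc 0 1))
    (hγ : Filter.Tendsto (fun n : ℕ => Gamma f g n ^ (1 / (n : ℝ))) Filter.atTop (nhds 1))
    (v L : ℝ) (hv0 : 0 ≤ v) (hL0 : 0 ≤ L)
    (hv : eVariationOn (fun x => Real.log (derivWithin f (Set.Icc 0 1) x)) (Set.Icc 0 1)
      = ENNReal.ofReal v)
    (hL : LipschitzOnWith (Real.toNNReal L)
      (fun x => Real.log (derivWithin f (Set.Icc 0 1) x)) (Set.Icc 0 1)) :
    (∀ n : ℕ, 2 * aseq f (n+1) - aseq f n - aseq f (n+2)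
      ≤ L * Real.exp v * Real.exp (-(aseq f (n+1)))) ∧
    (∀ n : ℕ, 2 * aseq g (n+1) - aseq g n - aseq g (n+2)
      ≤ L * Real.exp v * Real.exp (-(aseq g (n+1)))) :=
  aseq_almost_convex_general f g hf v L hv0 hL0 hv hL
end
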